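/- For the bit-vector testing problem f with parameters n, m ≥ 1: if A ⊆ X and B ⊆ Y are nonempty sets with f(x,y) = 1 for all (x,y) ∈ A × B, then |A| ≤ (n − log₂|B|)^m. -/

import Mathlib

/-- `f` has `(s,w,t)`-certificates: there is a code `T : Y → Σ^s` with alphabet
`Σ = {0,1}^w` such that for every query `x` and database `y` some set `P` of at
most `t` cells determines the answer `f (x, y)`. -/
def HasCertificates {X Y Z : Type*} (f : X × Y → Z) (s w t : ℕ) : Prop :=
  ∃ T : Y → Fin s → (Fin w → Bool),
    ∀ x : X, ∀ y : Y, ∃ P : Finset (Fin s), P.card ≤ t ∧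
      ∀ y' : Y, (∀ i ∈ P, T y' i = T y i) → f (x, y') = f (x, y)

/-- The bit-vector testing problem with parameters `n, m`: a database is a bit-vector
`y ∈ {0,1}^n`, a query is a pair `(u, v)` of an `m`-tuple of positions and a prediction,
and the answer is `1` iff `y (u j) = v j` for every `j`. -/
def bvTest (n m : ℕ) : ((Fin m → Fin n) × (Fin m → Bool)) × (Fin n → Bool) → Fin 2 :=
  fun p => if ∀ j : Fin m, p.2 (p.1.1 j) = p.1.2 j then 1 else 0

/-!
Let `F` be the set of positions on which all vectors of `B` agree. A query accepted by every
`y ∈ B` may only read positions in `F`, and its prediction is then forced by any `y₀ ∈ B`,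
so `|A| ≤ |F|^m`. On the other hand a vector of `B` is determined by its values off `F`,
so `|B| ≤ 2^(n - |F|)`, i.e. `|F| ≤ n - log₂ |B|`.
-/

namespace Finset

variable {ι α : Type*} [Fintype ι]

open Classical in
noncomputable def fixedCoords (B : Finset (ι → α)) : Finset ι :=
  {i | ∀ y ∈ B, ∀ z ∈ B, y i = z i}

theorem mem_fixedCoords {B : Finset (ι → α)} {i : ι} :
    i ∈ B.fixedCoords ↔ ∀ y ∈ B, ∀ z ∈ B, y i = z i := by
  simp [fixedCoords]

theorem card_le_pow_card_sub_card_fixedCoords [Fintype α] (B : Finset (ι → α)) :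
    #B ≤ Fintype.card α ^ (Fintype.card ι - #B.fixedCoords) := by
  classical
  have hinj : Set.InjOn (fun (y : ι → α) (i : ↥B.fixedCoordsᶜ) => y i) ↑B := by
    intro y hy z hz hyz
    funext i
    by_cases hi : i ∈ B.fixedCoords
    · exact mem_fixedCoords.1 hi y hy z hz
    · exact congrFun hyz ⟨i, mem_compl.2 hi⟩
  simpa using card_le_card_of_injOn _ (fun _ _ => mem_univ _) hinj

theorem card_le_card_fixedCoords_pow {κ : Type*} [Fintype κ] [DecidableEq κ]
    {B : Finset (ι → α)} (hB : B.Nonempty) {A : Finset ((κ → ι) × (κ → α))}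
    (hA : ∀ x ∈ A, ∀ y ∈ B, y ∘ x.1 = x.2) :
    #A ≤ #B.fixedCoords ^ Fintype.card κ := by
  obtain ⟨y₀, hy₀⟩ := hB
  have hmaps : Set.MapsTo Prod.fst (A : Set ((κ → ι) × (κ → α)))
      (Fintype.piFinset fun _ : κ => B.fixedCoords : Set (κ → ι)) := by
    intro x hx
    simp only [mem_coe, Fintype.mem_piFinset, mem_fixedCoords]
    intro j y hy z hz
    exact (congrFun (hA x hx y hy) j).trans (congrFun (hA x hx z hz) j).symm
  have hinj : Set.InjOn Prod.fst (A : Set ((κ → ι) × (κ → α))) := by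
    intro x hx x' hx' h
    exact Prod.ext h (by rw [← hA x hx y₀ hy₀, ← hA x' hx' y₀ hy₀, h])
  simpa using card_le_card_of_injOn _ hmaps hinj

end Finset

open Finset

theorem Real.logb_two_natCast_le_of_le_two_pow {N k : ℕ} (hN : 0 < N) (h : N ≤ 2 ^ k) :
    Real.logb 2 N ≤ k := by
  rw [Real.logb_le_iff_le_rpow one_lt_two (by exact_mod_cast hN), Real.rpow_natCast]
  exact_mod_cast h

theorem bvTest_eq_one_iff {n m : ℕ} {x : (Fin m → Fin n) × (Fin m → Bool)} {y : Fin n → Bool} :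
    bvTest n m (x, y) = 1 ↔ y ∘ x.1 = x.2 := by
  rw [funext_iff]
  unfold bvTest
  dsimp only
  split_ifs with h <;> simp [h]

theorem bvTest_rectangle_bound_general (n m : ℕ)
    (A : Finset ((Fin m → Fin n) × (Fin m → Bool))) (B : Finset (Fin n → Bool))
    (hB : B.Nonempty)
    (hone : ∀ x ∈ A, ∀ y ∈ B, bvTest n m (x, y) = 1) :
    (A.card : ℝ) ≤ ((n : ℝ) - Real.logb 2 (B.card)) ^ m := by
  have hA : #A ≤ #B.fixedCoords ^ m := by
    simpa using card_le_card_fixedCoords_pow hB fun x hx y hy => bvTest_eq_one_iff.1 (hone x hx y hy)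
  have hBcard : #B ≤ 2 ^ (n - #B.fixedCoords) := by
    simpa using card_le_pow_card_sub_card_fixedCoords B
  have hlog : Real.logb 2 #B ≤ n - #B.fixedCoords := by
    have := Real.logb_two_natCast_le_of_le_two_pow hB.card_pos hBcard
    rwa [Nat.cast_sub (by simpa using card_le_univ B.fixedCoords)] at this
  calc (#A : ℝ) ≤ (#B.fixedCoords : ℝ) ^ m := by exact_mod_cast hA
    _ ≤ ((n : ℝ) - Real.logb 2 #B) ^ m := pow_le_pow_left₀ (by positivity) (by linarith) m

/-- Every monochromatic 1-rectangle `A × B` of the bit-vector testing problem satisfies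
`|A| ≤ (n − log₂ |B|)^m`. -/
theorem bvTest_rectangle_bound (n m : ℕ) (hn : 1 ≤ n) (hm : 1 ≤ m)
    (A : Finset ((Fin m → Fin n) × (Fin m → Bool))) (B : Finset (Fin n → Bool))
    (hA : A.Nonempty) (hB : B.Nonempty)
    (hone : ∀ x ∈ A, ∀ y ∈ B, bvTest n m (x, y) = 1) :
    (A.card : ℝ) ≤ ((n : ℝ) - Real.logb 2 (B.card)) ^ m :=
  bvTest_rectangle_bound_general n m A B hB hone
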